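/- arXiv:2411.09866 — 2 statements merged into one kernel-verified Lean document; each statement's English description precedes it below -/
import Mathlib

section
/- Assume ‖a‖² ≥ 2 and let h ∈ ℝ^L satisfy ‖h‖² > ε(h) (i.e. h lies in the good set). Then there exists a unique x > 0 such that R_h(x) = x·R'_h(x), where R'_h denotes the derivative of P ↦ R_h(P). Moreover, the function l(x) = R_h(x) − x·R'_h(x) is strictly increasing on [0,∞), satisfies l(0) = −(1/2)·log₂(‖a‖²) < 0, and is strictly positive for all x greater than this unique zero. -/
open scoped BigOperators Classical
open Finset

noncomputable section

/-- Euclidean inner product on `Fin L → ℝ`. -/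
def ip {L : ℕ} (x y : Fin L → ℝ) : ℝ := ∑ i, x i * y i

/-- Squared Euclidean norm on `Fin L → ℝ`. -/
def nsq {L : ℕ} (x : Fin L → ℝ) : ℝ := ∑ i, (x i) ^ 2

/-- ε(h) = ‖h‖²‖a‖² − ⟨h,a⟩². -/
def eps {L : ℕ} (a h : Fin L → ℝ) : ℝ := nsq h * nsq a - (ip h a) ^ 2

/-- Symmetric-policy computation rate R_h(P). -/
def Rsym {L : ℕ} (a h : Fin L → ℝ) (P : ℝ) : ℝ :=
  (1 / 2) * Real.logb 2 ((1 + P * nsq h) / (nsq a + P * eps a h))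

/-- The vector √p∘h with entries √(p_l)·h_l. -/
def sqp {L : ℕ} (p h : Fin L → ℝ) : Fin L → ℝ := fun l => Real.sqrt (p l) * h l

/-- Asymmetric-policy computation rate R(h,p). -/
def Rasym {L : ℕ} (a h p : Fin L → ℝ) : ℝ :=
  (1 / 2) * Real.logb 2 ((1 + nsq (sqp p h)) /
    (nsq a + (nsq (sqp p h) * nsq a - (ip (sqp p h) a) ^ 2)))

/-- The KKT water-filling-type solution P^KKT_h(λ). -/
def PKKT {L : ℕ} (a h : Fin L → ℝ) (lam : ℝ) : ℝ :=
  if ∃ t : ℝ, h = t • a then 1 / lam - 1 / nsq h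
  else (-(2 * nsq h * nsq a - (ip h a) ^ 2) +
      Real.sqrt ((2 * nsq h * nsq a - (ip h a) ^ 2) ^ 2 -
        4 * (nsq h * eps a h) * (nsq a - (ip h a) ^ 2 / lam))) /
    (2 * (nsq h * eps a h))


/-! With `N = ‖h‖²`, `A = ‖a‖²` and `E = ε(h)` the rate is
`R(P) = log₂((1 + PN)/(A + PE))/2`, and `l(x) = R(x) - x R'(x)` is the intercept of the tangent
of `R` at `x`. Since `(R - x R')' = -x R''` and `R'(P) = (NA - E)/(2 log 2 (1 + PN)(A + PE))` is
strictly decreasing (as `E < N ≤ NA`), `l` is strictly increasing on `[0, ∞)`. It starts at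
`l(0) = R(0) = -log₂ A / 2 < 0`, and
`2 log 2 · l(x) = log((1 + xN)/(A + xE)) + 1/(1 + xN) - A/(A + xE)`
becomes positive for large `x`: the logarithm tends to `log(N/E) > 0`, or to `∞` when `E = 0`.
The intermediate value theorem gives the unique positive zero. -/

open Real

def tangentIntercept (f : ℝ → ℝ) (x : ℝ) : ℝ := f x - x * deriv f x

lemma tangentIntercept_zero (f : ℝ → ℝ) : tangentIntercept f 0 = f 0 := by
  simp [tangentIntercept]

section TangentIntercept

variable {f f' f'' : ℝ → ℝ}

lemma tangentIntercept_eqOn {s : Set ℝ} (hf : ∀ x ∈ s, HasDerivAt f (f' x) x) :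
    Set.EqOn (tangentIntercept f) (fun x => f x - x * f' x) s := fun x hx => by
  simp only [tangentIntercept, (hf x hx).deriv]

lemma hasDerivAt_sub_mul_deriv {x : ℝ} (hf : HasDerivAt f (f' x) x)
    (hf' : HasDerivAt f' (f'' x) x) :
    HasDerivAt (fun y => f y - y * f' y) (-(x * f'' x)) x :=
  (hf.sub ((hasDerivAt_id' x).mul hf')).congr_deriv (by ring)

lemma continuousOn_tangentIntercept {s : Set ℝ} (hf : ∀ x ∈ s, HasDerivAt f (f' x) x)
    (hf' : ContinuousOn f' s) : ContinuousOn (tangentIntercept f) s := by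
  refine ContinuousOn.congr ?_ (tangentIntercept_eqOn hf)
  have hfc : ContinuousOn f s := fun x hx => (hf x hx).continuousAt.continuousWithinAt
  exact hfc.sub (continuousOn_id.mul hf')

lemma strictMonoOn_tangentIntercept (hf : ∀ x ∈ Set.Ici 0, HasDerivAt f (f' x) x)
    (hf' : ∀ x ∈ Set.Ici 0, HasDerivAt f' (f'' x) x) (hf'' : ∀ x ∈ Set.Ioi 0, f'' x < 0) :
    StrictMonoOn (tangentIntercept f) (Set.Ici 0) := by
  refine StrictMonoOn.congr ?_ (tangentIntercept_eqOn hf).symm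
  have hg := fun x hx => hasDerivAt_sub_mul_deriv (hf x hx) (hf' x hx)
  refine strictMonoOn_of_deriv_pos (convex_Ici 0)
    (fun x hx => (hg x hx).continuousAt.continuousWithinAt) fun x hx => ?_
  rw [interior_Ici] at hx
  rw [(hg x (Set.mem_Ici.2 hx.le)).deriv, neg_pos]
  exact mul_neg_of_pos_of_neg hx (hf'' x hx)

end TangentIntercept

lemma existsUnique_pos_eq_zero_of_strictMonoOn {g : ℝ → ℝ} {b : ℝ}
    (hcont : ContinuousOn g (Set.Ici 0)) (hmono : StrictMonoOn g (Set.Ici 0)) (h0 : g 0 < 0)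
    (hb : 0 ≤ b) (hgb : 0 < g b) : ∃! x, 0 < x ∧ g x = 0 := by
  obtain ⟨x, hx, hgx⟩ :=
    intermediate_value_Icc hb (hcont.mono Set.Icc_subset_Ici_self) ⟨h0.le, hgb.le⟩
  have hx0 : 0 < x := hx.1.lt_of_ne (by rintro rfl; exact h0.ne hgx)
  exact ⟨x, ⟨hx0, hgx⟩, fun y ⟨hy, hgy⟩ =>
    hmono.injOn hy.le hx0.le (hgy.trans hgx.symm)⟩

lemma eps_nonneg {L : ℕ} (a h : Fin L → ℝ) : 0 ≤ eps a h :=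
  sub_nonneg.2 (Finset.sum_mul_sq_le_sq_mul_sq _ _ _)

def symRate (N A E P : ℝ) : ℝ := 1 / 2 * logb 2 ((1 + P * N) / (A + P * E))

def symRateDeriv (N A E P : ℝ) : ℝ :=
  (N * A - E) / (2 * log 2 * ((1 + P * N) * (A + P * E)))

lemma Rsym_eq_symRate {L : ℕ} (a h : Fin L → ℝ) :
    Rsym a h = symRate (nsq h) (nsq a) (eps a h) :=
  rfl

section SymRate

variable {N A E x : ℝ}

lemma symRate_zero : symRate N A E 0 = -(1 / 2) * logb 2 A := by
  simp [symRate, logb_inv]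

lemma hasDerivAt_symRate (hu : 1 + x * N ≠ 0) (hv : A + x * E ≠ 0) :
    HasDerivAt (symRate N A E) (symRateDeriv N A E x) x := by
  have hq := (((hasDerivAt_id' x).mul_const N).const_add 1).div
    (((hasDerivAt_id' x).mul_const E).const_add A) hv
  have := ((hq.log (div_ne_zero hu hv)).div_const (log 2)).const_mul (1 / 2)
  unfold symRate logb symRateDeriv
  refine this.congr_deriv ?_
  simp only [Pi.div_apply]
  field_simp
  ring

lemma hasDerivAt_symRateDeriv (hu : 1 + x * N ≠ 0) (hv : A + x * E ≠ 0) :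
    HasDerivAt (symRateDeriv N A E)
      (-(N * A - E) * (N * (A + x * E) + (1 + x * N) * E) /
        (2 * log 2 * ((1 + x * N) * (A + x * E)) ^ 2)) x := by
  have hp := (((hasDerivAt_id' x).mul_const N).const_add 1).mul
    (((hasDerivAt_id' x).mul_const E).const_add A)
  have := ((hasDerivAt_const x (N * A - E)).div (hp.const_mul (2 * log 2))
    (mul_ne_zero (mul_ne_zero two_ne_zero (log_pos one_lt_two).ne') (mul_ne_zero hu hv)))
  unfold symRateDeriv
  refine this.congr_deriv ?_
  simp only [Pi.mul_apply]
  field_simp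
  ring

lemma one_add_mul_pos_and_add_mul_pos (hx : 0 ≤ x) (hN : 0 ≤ N) (hA : 0 < A) (hE : 0 ≤ E) :
    0 < 1 + x * N ∧ 0 < A + x * E :=
  ⟨by positivity, by positivity⟩

lemma continuousOn_tangentIntercept_symRate (hN : 0 ≤ N) (hA : 0 < A) (hE : 0 ≤ E) :
    ContinuousOn (tangentIntercept (symRate N A E)) (Set.Ici 0) := by
  have hpos : ∀ x ∈ Set.Ici (0 : ℝ), 0 < 1 + x * N ∧ 0 < A + x * E := fun x hx =>
    one_add_mul_pos_and_add_mul_pos hx hN hA hE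
  refine continuousOn_tangentIntercept
    (fun x hx => hasDerivAt_symRate (hpos x hx).1.ne' (hpos x hx).2.ne') fun x hx => ?_
  exact (hasDerivAt_symRateDeriv (hpos x hx).1.ne' (hpos x hx).2.ne').continuousAt
    |>.continuousWithinAt

lemma strictMonoOn_tangentIntercept_symRate (hN : 0 < N) (hA : 0 < A) (hE : 0 ≤ E)
    (hEN : E < N * A) : StrictMonoOn (tangentIntercept (symRate N A E)) (Set.Ici 0) := by
  have hpos : ∀ x ∈ Set.Ici (0 : ℝ), 0 < 1 + x * N ∧ 0 < A + x * E := fun x hx =>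
    one_add_mul_pos_and_add_mul_pos hx hN.le hA hE
  refine strictMonoOn_tangentIntercept
    (fun x hx => hasDerivAt_symRate (hpos x hx).1.ne' (hpos x hx).2.ne')
    (fun x hx => hasDerivAt_symRateDeriv (hpos x hx).1.ne' (hpos x hx).2.ne') fun x hx => ?_
  obtain ⟨hu, hv⟩ := hpos x (Set.mem_Ici.2 (le_of_lt hx))
  have hlog : 0 < log 2 := log_pos one_lt_two
  refine div_neg_of_neg_of_pos ?_ (by positivity)
  rw [neg_mul]
  exact neg_neg_of_pos (mul_pos (by linarith) (by positivity))

lemma two_mul_log_two_mul_tangentIntercept_symRate (hu : 0 < 1 + x * N)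
    (hv : 0 < A + x * E) :
    2 * log 2 * tangentIntercept (symRate N A E) x
      = log ((1 + x * N) / (A + x * E)) + 1 / (1 + x * N) - A / (A + x * E) := by
  rw [tangentIntercept, (hasDerivAt_symRate hu.ne' hv.ne').deriv, symRate, symRateDeriv, logb]
  have hlog : 0 < log 2 := log_pos one_lt_two
  field_simp
  ring

lemma exists_tangentIntercept_symRate_pos (hN : 0 < N) (hA : 0 < A) (hE : 0 ≤ E)
    (hEN : E < N) :
    ∃ x, 0 ≤ x ∧ 0 < tangentIntercept (symRate N A E) x := by
  suffices ∃ x, 0 ≤ x ∧ A / (A + x * E) < log ((1 + x * N) / (A + x * E)) by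
    obtain ⟨x, hx, hlt⟩ := this
    obtain ⟨hu, hv⟩ := one_add_mul_pos_and_add_mul_pos hx hN.le hA hE
    have hlog : 0 < log 2 := log_pos one_lt_two
    have hpos : 0 < 2 * log 2 * tangentIntercept (symRate N A E) x := by
      have : 0 < 1 / (1 + x * N) := by positivity
      rw [two_mul_log_two_mul_tangentIntercept_symRate hu hv]
      linarith
    exact ⟨x, hx, pos_of_mul_pos_right hpos (by positivity)⟩
  rcases hE.eq_or_lt with rfl | hE
  · refine ⟨exp 1 * A / N, by positivity, ?_⟩
    rw [mul_zero, add_zero, div_self hA.ne', div_mul_cancel₀ _ hN.ne',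
      lt_log_iff_exp_lt (by positivity), lt_div_iff₀ hA]
    linarith
  · -- chosen so that `(1 + x N) - (A + x E) = 1 + A N / E`
    set x := A * (E + N) / (E * (N - E))
    have hx : 0 < x := by have := sub_pos.2 hEN; positivity
    obtain ⟨hu, hv⟩ := one_add_mul_pos_and_add_mul_pos hx.le hN.le hA hE.le
    have hkey : 1 - (A + x * E) / (1 + x * N) - A / (A + x * E)
        = (x * E + A ^ 2 * N / E) / ((1 + x * N) * (A + x * E)) := by
      have := (sub_pos.2 hEN).ne'
      rw [eq_div_iff (mul_pos hu hv).ne']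
      field_simp
      simp only [x]
      field_simp
      ring
    refine ⟨x, hx.le, ?_⟩
    calc A / (A + x * E) < 1 - (A + x * E) / (1 + x * N) := by
          have : 0 < (x * E + A ^ 2 * N / E) / ((1 + x * N) * (A + x * E)) := by positivity
          linarith
      _ = 1 - ((1 + x * N) / (A + x * E))⁻¹ := by rw [inv_div]
      _ ≤ log ((1 + x * N) / (A + x * E)) := one_sub_inv_le_log_of_pos (by positivity)

end SymRate

theorem stmt13_general {L : ℕ}
    (a : Fin L → ℝ)
    (ha2 : 2 ≤ nsq a)
    (h : Fin L → ℝ) (hgood : eps a h < nsq h) :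
    (∃! x : ℝ, 0 < x ∧ Rsym a h x = x * deriv (Rsym a h) x) ∧
    StrictMonoOn (fun x => Rsym a h x - x * deriv (Rsym a h) x) (Set.Ici 0) ∧
    (Rsym a h 0 - 0 * deriv (Rsym a h) 0 = -(1 / 2) * Real.logb 2 (nsq a)) ∧
    (-(1 / 2) * Real.logb 2 (nsq a) < 0) ∧
    (∀ x y : ℝ, (0 < x ∧ Rsym a h x = x * deriv (Rsym a h) x) → x < y →
      0 < Rsym a h y - y * deriv (Rsym a h) y) := by
  have hE := eps_nonneg a h
  have hN : 0 < nsq h := hE.trans_lt hgood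
  have hA : 1 < nsq a := by linarith
  have hA0 : 0 < nsq a := by linarith
  have hEN : eps a h < nsq h * nsq a := hgood.trans_le (le_mul_of_one_le_right hN.le hA.le)
  rw [Rsym_eq_symRate]
  set l := tangentIntercept (symRate (nsq h) (nsq a) (eps a h))
  have hmono : StrictMonoOn l (Set.Ici 0) :=
    strictMonoOn_tangentIntercept_symRate hN hA0 hE hEN
  have hl0 : l 0 = -(1 / 2) * logb 2 (nsq a) := (tangentIntercept_zero _).trans symRate_zero
  have hneg : -(1 / 2) * logb 2 (nsq a) < 0 := by
    have := logb_pos one_lt_two hA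
    linarith
  obtain ⟨b, hb, hlb⟩ := exists_tangentIntercept_symRate_pos hN hA0 hE hgood
  have huniq := existsUnique_pos_eq_zero_of_strictMonoOn
    (continuousOn_tangentIntercept_symRate hN.le hA0 hE) hmono (hl0.trans_lt hneg) hb hlb
  refine ⟨by simpa only [l, tangentIntercept, sub_eq_zero] using huniq, hmono, hl0, hneg, ?_⟩
  rintro x y ⟨hx, hxl⟩ hxy
  have hlx : l x = 0 := sub_eq_zero.2 hxl
  exact hlx ▸ hmono hx.le (hx.le.trans hxy.le) hxy

/-- for ‖a‖² ≥ 2 and h in the good set, there is a unique x > 0 with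
R_h(x) = x·R'_h(x); moreover l(x) = R_h(x) − x·R'_h(x) is strictly increasing on [0,∞),
l(0) = −(1/2)log₂‖a‖² < 0, and l is strictly positive beyond the unique zero. -/
theorem stmt13 {L : ℕ} (hL : 1 ≤ L)
    (a : Fin L → ℝ) (ha : a ≠ 0) (haint : ∀ i, ∃ n : ℤ, a i = (n : ℝ))
    (ha2 : 2 ≤ nsq a)
    (h : Fin L → ℝ) (hgood : eps a h < nsq h) :
    (∃! x : ℝ, 0 < x ∧ Rsym a h x = x * deriv (Rsym a h) x) ∧
    StrictMonoOn (fun x => Rsym a h x - x * deriv (Rsym a h) x) (Set.Ici 0) ∧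
    (Rsym a h 0 - 0 * deriv (Rsym a h) 0 = -(1 / 2) * Real.logb 2 (nsq a)) ∧
    (-(1 / 2) * Real.logb 2 (nsq a) < 0) ∧
    (∀ x y : ℝ, (0 < x ∧ Rsym a h x = x * deriv (Rsym a h) x) → x < y →
      0 < Rsym a h y - y * deriv (Rsym a h) y) :=
  stmt13_general a ha2 h hgood
end
end

section
/- Let h ∈ ℝ^L be nonzero and not collinear with a. Then √μ · P^KKT_h(μ) converges as μ → 0⁺, with lim_{μ→0⁺} √μ · P^KKT_h(μ) = |⟨h,a⟩| / (‖h‖ · √ε(h)). In particular, if ⟨h,a⟩ ≠ 0, then P^KKT_h(μ) grows at least like √(1/μ) and is unbounded as μ → 0⁺. -/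
open scoped BigOperators Classical
open Finset

noncomputable section

private noncomputable def gfun {L : ℕ} (a h : Fin L → ℝ) (μ : ℝ) : ℝ :=
  (Real.sqrt μ * (-(2 * nsq h * nsq a - (ip h a) ^ 2)) +
    Real.sqrt (μ * ((2 * nsq h * nsq a - (ip h a) ^ 2) ^ 2 -
      4 * (nsq h * eps a h) * nsq a) + 4 * (nsq h * eps a h) * (ip h a) ^ 2)) /
  (2 * (nsq h * eps a h))

lemma nsq_pos' {L : ℕ} {x : Fin L → ℝ} (hx : x ≠ 0) : 0 < nsq x := by
  rcases (Finset.sum_nonneg fun i (_ : i ∈ Finset.univ) => sq_nonneg (x i)).lt_or_eq with h' | h'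
  · exact h'
  · exfalso; apply hx; funext i
    have := (Finset.sum_eq_zero_iff_of_nonneg (fun i _ => sq_nonneg (x i))).mp h'.symm i
      (Finset.mem_univ i)
    have := pow_eq_zero_iff (n := 2) (by norm_num) |>.mp this
    simpa using this

lemma eps_pos' {L : ℕ} {a h : Fin L → ℝ} (ha : a ≠ 0)
    (hnc : ¬ ∃ t : ℝ, h = t • a) : 0 < eps a h := by
  have hA : 0 < nsq a := nsq_pos' ha
  set v : Fin L → ℝ := fun i => nsq a * h i - ip h a * a i with hvdef
  have hvne : v ≠ 0 := by
    intro hz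
    apply hnc
    refine ⟨ip h a / nsq a, ?_⟩
    funext i
    have h0 := congrFun hz i
    simp only [hvdef, Pi.zero_apply] at h0
    rw [Pi.smul_apply, smul_eq_mul, div_mul_eq_mul_div, eq_div_iff hA.ne']
    linarith
  have hv : nsq v = nsq a * eps a h := by
    have e1 : ∀ i : Fin L, (v i) ^ 2
        = nsq a ^ 2 * h i ^ 2 - (2 * nsq a * ip h a) * (h i * a i)
          + ip h a ^ 2 * a i ^ 2 := fun i => by simp only [hvdef]; ring
    calc nsq v = ∑ i, (nsq a ^ 2 * h i ^ 2 - (2 * nsq a * ip h a) * (h i * a i)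
          + ip h a ^ 2 * a i ^ 2) := Finset.sum_congr rfl fun i _ => e1 i
      _ = nsq a ^ 2 * nsq h - (2 * nsq a * ip h a) * ip h a + ip h a ^ 2 * nsq a := by
          unfold nsq ip
          rw [Finset.sum_add_distrib, Finset.sum_sub_distrib, ← Finset.mul_sum,
            ← Finset.mul_sum, ← Finset.mul_sum]
      _ = nsq a * eps a h := by unfold eps; ring
  nlinarith [nsq_pos' hvne, hv, hA]

/-- for nonzero h not collinear with a, √μ·P^KKT_h(μ) tends to
|⟨h,a⟩|/(‖h‖·√ε(h)) as μ → 0⁺; in particular P^KKT_h(μ) is unbounded (tends to +∞)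
as μ → 0⁺ when ⟨h,a⟩ ≠ 0. -/
theorem stmt19 {L : ℕ} (hL : 1 ≤ L)
    (a : Fin L → ℝ) (ha : a ≠ 0) (haint : ∀ i, ∃ n : ℤ, a i = (n : ℝ))
    (h : Fin L → ℝ) (hh : h ≠ 0) (hnc : ¬ ∃ t : ℝ, h = t • a) :
    Filter.Tendsto (fun μ => Real.sqrt μ * PKKT a h μ)
      (nhdsWithin 0 (Set.Ioi 0))
      (nhds (|ip h a| / (Real.sqrt (nsq h) * Real.sqrt (eps a h)))) ∧
    (ip h a ≠ 0 → Filter.Tendsto (fun μ => PKKT a h μ)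
      (nhdsWithin 0 (Set.Ioi 0)) Filter.atTop) := by
  have hN : 0 < nsq h := nsq_pos' hh
  have hA : 0 < nsq a := nsq_pos' ha
  have hE : 0 < eps a h := eps_pos' ha hnc
  have hd : 0 < nsq h * eps a h := mul_pos hN hE
  -- key identity on Ioi 0
  have keyeq : ∀ μ : ℝ, 0 < μ → Real.sqrt μ * PKKT a h μ = gfun a h μ := by
    intro μ hμ
    unfold PKKT gfun
    rw [if_neg hnc]
    have h1 : Real.sqrt μ * Real.sqrt ((2 * nsq h * nsq a - (ip h a) ^ 2) ^ 2 -
        4 * (nsq h * eps a h) * (nsq a - (ip h a) ^ 2 / μ))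
        = Real.sqrt (μ * ((2 * nsq h * nsq a - (ip h a) ^ 2) ^ 2 -
            4 * (nsq h * eps a h) * nsq a) + 4 * (nsq h * eps a h) * (ip h a) ^ 2) := by
      rw [← Real.sqrt_mul hμ.le]
      congr 1
      field_simp
      ring
    rw [← mul_div_assoc, mul_add, h1]
  -- value of gfun at 0
  have hval : gfun a h 0 = |ip h a| / (Real.sqrt (nsq h) * Real.sqrt (eps a h)) := by
    unfold gfun
    rw [Real.sqrt_zero, zero_mul, zero_mul, zero_add]
    have hmul : Real.sqrt (nsq h) * Real.sqrt (eps a h) *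
        (Real.sqrt (nsq h) * Real.sqrt (eps a h)) = nsq h * eps a h := by
      rw [mul_mul_mul_comm, Real.mul_self_sqrt hN.le, Real.mul_self_sqrt hE.le]
    have h4 : 4 * (nsq h * eps a h) * (ip h a) ^ 2
        = (2 * (Real.sqrt (nsq h) * Real.sqrt (eps a h)) * |ip h a|) ^ 2 := by
      rw [mul_pow, mul_pow, sq_abs]
      nlinarith [hmul]
    rw [h4, zero_add, Real.sqrt_sq (by positivity)]
    rw [show nsq h * eps a h = Real.sqrt (nsq h) * Real.sqrt (eps a h) *
        (Real.sqrt (nsq h) * Real.sqrt (eps a h)) from hmul.symm]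
    have hs : Real.sqrt (nsq h) * Real.sqrt (eps a h) ≠ 0 := by positivity
    field_simp
  have cont : Continuous (gfun a h) := by
    unfold gfun
    fun_prop
  have tend1 : Filter.Tendsto (fun μ => Real.sqrt μ * PKKT a h μ)
      (nhdsWithin 0 (Set.Ioi 0))
      (nhds (|ip h a| / (Real.sqrt (nsq h) * Real.sqrt (eps a h)))) := by
    have hc : Filter.Tendsto (gfun a h) (nhdsWithin 0 (Set.Ioi 0)) (nhds (gfun a h 0)) :=
      (cont.continuousAt.tendsto).mono_left nhdsWithin_le_nhds
    rw [hval] at hc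
    apply hc.congr'
    filter_upwards [self_mem_nhdsWithin] with μ hμ
    exact (keyeq μ hμ).symm
  refine ⟨tend1, fun hcne => ?_⟩
  have hTpos : 0 < |ip h a| / (Real.sqrt (nsq h) * Real.sqrt (eps a h)) := by
    apply div_pos (abs_pos.mpr hcne)
    positivity
  have h2 : Filter.Tendsto (fun μ => (Real.sqrt μ)⁻¹) (nhdsWithin 0 (Set.Ioi 0))
      Filter.atTop := by
    apply tendsto_inv_nhdsGT_zero.comp
    rw [tendsto_nhdsWithin_iff]
    constructor
    · exact (Real.continuous_sqrt.tendsto' 0 0 Real.sqrt_zero).mono_left nhdsWithin_le_nhds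
    · filter_upwards [self_mem_nhdsWithin] with μ hμ
      exact Real.sqrt_pos.mpr hμ
  have h3 := Filter.Tendsto.pos_mul_atTop hTpos tend1 h2
  apply h3.congr'
  filter_upwards [self_mem_nhdsWithin] with μ hμ
  have hne : Real.sqrt μ ≠ 0 := (Real.sqrt_pos.mpr hμ).ne'
  rw [mul_comm (Real.sqrt μ) (PKKT a h μ), mul_assoc, mul_inv_cancel₀ hne, mul_one]
end
end
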